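/- Let (Ω, 𝒜, ℙ) be a probability space, m ≥ 1, and X = (X_1,…,X_m) an m-tuple of stochastic processes with right-continuous paths having left limits. Let ρ map each delayed and stopped version of X to a real random variable, and let 𝒯 be a set of delays containing a refining sequence (τ^n)_{n∈ℕ} of phased delays increasing to identity; set 𝒳 = {X⋄τ : τ ∈ 𝒯} ∪ {X}. Let δ and δ̃ be decomposition schemes on 𝒳: for each Y ∈ 𝒳, δ(Y) = (δ_1(Y),…,δ_m(Y)) and δ̃(Y) are m-tuples of processes with right-continuous paths having left limits, starting at 0, that are additive (almost surely ρ(Y^t) − ρ(Y^0) = Σ_i δ_i(Y)(t) for every t ≥ 0, and likewise for δ̃) and normalized (if every path of Y_i is constant on (a,b], then almost surely δ_i(Y), resp. δ̃_i(Y), is constant on (a,b]). Assume both δ and δ̃ are stable at X: for every t > 0 and i, δ_i(X⋄τ^n)(t−) → δ_i(X)(t−) and δ̃_i(X⋄τ^n)(t−) → δ̃_i(X)(t−) in probability as n → ∞. Then almost surely δ_i(X)(t) = δ̃_i(X)(t) for all i and all t ≥ 0. -/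

import Mathlib

/-!
On an interval of the partition of a phased delay `τ` only one component of `X ⋄ τ` moves.
Normalization freezes the other components of both decompositions there, and additivity
then forces the moving components to agree as well, since both decompositions sum to
`ρ(Y^t) - ρ(Y^0)`; inductively along the partition, `δ` and `δ'` agree at `X ⋄ τⁿ`.
Stability transports this to the left limits of `δ X` and `δ' X` (limits in probability are
unique), and right-continuity recovers the values from the left limits at rational times.
-/

open Filter Topology Set MeasureTheory

/-- A path is càdlàg on `[0,∞)`: right-continuous at every `t ≥ 0` and with left limits at
every `t > 0`. -/
def CadlagOn (f : ℝ → ℝ) : Prop :=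
  (∀ t, 0 ≤ t → ContinuousWithinAt f (Ici t) t) ∧
  (∀ t, 0 < t → ∃ L, Tendsto f (𝓝[<] t) (𝓝 L))

/-- A delay: each component is `[0,∞)`-valued, nondecreasing, right-continuous and bounded
above by the identity on `[0,∞)`. -/
def IsDelay {m : ℕ} (τ : Fin m → ℝ → ℝ) : Prop :=
  ∀ i, (∀ s, 0 ≤ s → 0 ≤ τ i s) ∧ (∀ s u, 0 ≤ s → s ≤ u → τ i s ≤ τ i u) ∧
    (∀ s, 0 ≤ s → ContinuousWithinAt (τ i) (Ici s) s) ∧ (∀ s, 0 ≤ s → τ i s ≤ s)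

/-- A delay is phased if there is an unbounded partition of `[0,∞)` such that on each
partition interval at most one of its components is non-constant. -/
def IsPhasedDelay {m : ℕ} (τ : Fin m → ℝ → ℝ) : Prop :=
  ∃ u : ℕ → ℝ, u 0 = 0 ∧ StrictMono u ∧ Tendsto u atTop atTop ∧
    ∀ l, ∃ i₀ : Fin m, ∀ j ≠ i₀,
      ∀ x ∈ Ioc (u l) (u (l + 1)), ∀ y ∈ Ioc (u l) (u (l + 1)), τ j x = τ j y

/-- A refining sequence of delays that increases to identity. -/
def IsRefiningToIdentity {m : ℕ} (τ : ℕ → Fin m → ℝ → ℝ) : Prop :=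
  ∀ (i : Fin m) (t : ℝ), 0 ≤ t →
    (∀ n, τ n i '' Icc 0 t ⊆ τ (n + 1) i '' Icc 0 t) ∧
    closure (⋃ n, τ n i '' Icc 0 t) = Icc 0 t

/-- The delayed process tuple `X ⋄ τ = (X_1 ∘ τ_1, …, X_m ∘ τ_m)`. -/
def delayed {Ω : Type*} {m : ℕ} (X : Fin m → Ω → ℝ → ℝ) (τ : Fin m → ℝ → ℝ) :
    Fin m → Ω → ℝ → ℝ :=
  fun i ω u => X i ω (τ i u)

/-- The componentwise stopped tuple of processes `Y^{(t_1,…,t_m)}`. -/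
noncomputable def stopProc {Ω : Type*} {m : ℕ} (Y : Fin m → Ω → ℝ → ℝ) (tv : Fin m → ℝ) :
    Fin m → Ω → ℝ → ℝ :=
  fun i ω u => if u ≤ tv i then Y i ω u else Y i ω (tv i)

/-- A decomposition scheme `δ` on a family `𝒳` of process tuples is good if, for every
`Y ∈ 𝒳`, the decomposition `δ Y` starts at `0`, has càdlàg paths, is additive and is
normalized. -/
def IsGoodScheme {Ω : Type*} [MeasurableSpace Ω] (μ : Measure Ω) {m : ℕ}
    (ρ : (Fin m → Ω → ℝ → ℝ) → Ω → ℝ) (𝒳 : Set (Fin m → Ω → ℝ → ℝ))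
    (δ : (Fin m → Ω → ℝ → ℝ) → Fin m → ℝ → Ω → ℝ) : Prop :=
  ∀ Y ∈ 𝒳,
    (∀ (i : Fin m) ω, δ Y i 0 ω = 0) ∧
    (∀ (i : Fin m) ω, CadlagOn (fun t => δ Y i t ω)) ∧
    (∀ t, 0 ≤ t → ∀ᵐ ω ∂μ,
      ρ (stopProc Y fun _ => t) ω - ρ (stopProc Y fun _ => 0) ω =
        ∑ i : Fin m, δ Y i t ω) ∧
    (∀ (i : Fin m) (a b : ℝ), 0 ≤ a → a < b →
      (∀ ω, ∀ x ∈ Ioc a b, ∀ y ∈ Ioc a b, Y i ω x = Y i ω y) →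
      ∀ᵐ ω ∂μ, ∀ x ∈ Ioc a b, ∀ y ∈ Ioc a b, δ Y i x ω = δ Y i y ω)

/-- A decomposition scheme `δ` is stable at `X` along the delay sequence `τ`: the left
limits of `δ (X ⋄ τ n)` converge in probability to the left limits of `δ X`. -/
def StableAt {Ω : Type*} [MeasurableSpace Ω] (μ : Measure Ω) {m : ℕ}
    (X : Fin m → Ω → ℝ → ℝ) (τ : ℕ → Fin m → ℝ → ℝ)
    (δ : (Fin m → Ω → ℝ → ℝ) → Fin m → ℝ → Ω → ℝ) : Prop :=
  ∀ (i : Fin m) (t : ℝ), 0 < t →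
    TendstoInMeasure μ
      (fun n ω => Function.leftLim (fun s => δ (delayed X (τ n)) i s ω) t) atTop
      (fun ω => Function.leftLim (fun s => δ X i s ω) t)

theorem leftLim_congr {α β : Type*} [TopologicalSpace α] [LinearOrder α] [OrderTopology α]
    [TopologicalSpace β] [T2Space β] {f g : α → β} {a : α} (h : f =ᶠ[𝓝[<] a] g)
    (ha : f a = g a) : Function.leftLim f a = Function.leftLim g a := by
  rcases eq_or_neBot (𝓝[<] a) with hbot | hne
  · rw [leftLim_eq_of_eq_bot f hbot, leftLim_eq_of_eq_bot g hbot, ha]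
  by_cases hlim : ∃ y, Tendsto f (𝓝[<] a) (𝓝 y)
  · obtain ⟨y, hy⟩ := hlim
    rw [leftLim_eq_of_tendsto hy, leftLim_eq_of_tendsto ((tendsto_congr' h).1 hy)]
  · rw [leftLim_eq_of_not_tendsto f hlim, leftLim_eq_of_not_tendsto g ?_, ha]
    simpa only [tendsto_congr' h] using hlim

theorem eq_of_tendsto_nhdsGT_of_eq_on_rat {F G : ℝ → ℝ} {t a b : ℝ}
    (hF : Tendsto F (𝓝[>] t) (𝓝 a)) (hG : Tendsto G (𝓝[>] t) (𝓝 b))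
    (hFG : ∀ q : ℚ, t < q → F q = G q) : a = b := by
  refine tendsto_nhds_unique_of_frequently_eq hF hG (frequently_iff.2 fun hU => ?_)
  obtain ⟨c, htc, hsub⟩ := mem_nhdsGT_iff_exists_Ioo_subset.1 hU
  obtain ⟨q, htq, hqc⟩ := exists_rat_btwn (show t < c from htc)
  exact ⟨q, hsub ⟨htq, hqc⟩, hFG q htq⟩

theorem eq_of_sum_eq_of_forall_ne_eq {ι M : Type*} [Fintype ι] [AddCommGroup M] {a b : ι → M}
    (i : ι) (hsum : ∑ j, a j = ∑ j, b j) (hne : ∀ j ≠ i, a j = b j) : a i = b i := by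
  have h := Fintype.sum_eq_single (f := fun j => a j - b j) i fun j hj => sub_eq_zero.2 (hne j hj)
  rw [Finset.sum_sub_distrib, hsum, sub_self] at h
  exact sub_eq_zero.1 h.symm

theorem eq_of_const_on_Ioc_of_tendsto_nhdsGT {h : ℝ → ℝ} {a b t : ℝ}
    (hc : Tendsto h (𝓝[>] a) (𝓝 (h a))) (hconst : ∀ x ∈ Ioc a b, ∀ y ∈ Ioc a b, h x = h y)
    (ht : t ∈ Ioc a b) : h t = h a := by
  refine tendsto_nhds_unique (tendsto_const_nhds.congr' ?_) hc
  filter_upwards [Ioo_mem_nhdsGT (ht.1.trans_le ht.2)] with s hs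
  exact hconst t ht s ⟨hs.1, hs.2.le⟩

namespace CadlagOn

variable {f : ℝ → ℝ} {t : ℝ}

theorem tendsto_nhdsGT (hf : CadlagOn f) (ht : 0 ≤ t) : Tendsto f (𝓝[>] t) (𝓝 (f t)) :=
  (hf.1 t ht).mono_left (nhdsWithin_mono _ Ioi_subset_Ici_self)

theorem tendsto_leftLim_nhdsGT (hf : CadlagOn f) (ht : 0 ≤ t) :
    Tendsto (Function.leftLim f) (𝓝[>] t) (𝓝 (f t)) := by
  refine (closed_nhds_basis (f t)).tendsto_right_iff.2 fun V ⟨hV, hVc⟩ => ?_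
  obtain ⟨c, htc, hsub⟩ := mem_nhdsGE_iff_exists_Ico_subset.1 (hf.1 t ht hV)
  filter_upwards [Ioo_mem_nhdsGT htc] with q hq
  obtain ⟨L, hL⟩ := hf.2 q (ht.trans_lt hq.1)
  rw [leftLim_eq_of_tendsto hL]
  refine hVc.mem_of_tendsto hL (mem_of_superset (Ioo_mem_nhdsLT hq.1) fun s hs => ?_)
  exact hsub ⟨hs.1.le, hs.2.trans hq.2⟩

end CadlagOn

theorem eq_of_sum_eq_of_phased {m : ℕ} {f g : Fin m → ℝ → ℝ} {u : ℕ → ℝ} {i₀ : ℕ → Fin m}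
    (hu0 : u 0 = 0) (hu : Monotone u) (hutop : Tendsto u atTop atTop)
    (hfg0 : ∀ i, f i 0 = g i 0)
    (hf : ∀ i t, 0 ≤ t → Tendsto (f i) (𝓝[>] t) (𝓝 (f i t)))
    (hg : ∀ i t, 0 ≤ t → Tendsto (g i) (𝓝[>] t) (𝓝 (g i t)))
    (hsum : ∀ t, 0 ≤ t → ∑ i, f i t = ∑ i, g i t)
    (hfconst : ∀ l, ∀ j ≠ i₀ l,
      ∀ x ∈ Ioc (u l) (u (l + 1)), ∀ y ∈ Ioc (u l) (u (l + 1)), f j x = f j y)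
    (hgconst : ∀ l, ∀ j ≠ i₀ l,
      ∀ x ∈ Ioc (u l) (u (l + 1)), ∀ y ∈ Ioc (u l) (u (l + 1)), g j x = g j y)
    {t : ℝ} (ht : 0 ≤ t) (i : Fin m) : f i t = g i t := by
  suffices H : ∀ l, ∀ t ∈ Icc 0 (u l), ∀ i, f i t = g i t by
    obtain ⟨l, hl⟩ := (hutop.eventually_ge_atTop t).exists
    exact H l t ⟨ht, hl⟩ i
  intro l
  induction l with
  | zero =>
    rintro t ⟨ht0, ht0'⟩ i
    rw [le_antisymm (hu0 ▸ ht0') ht0]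
    exact hfg0 i
  | succ l ih =>
    rintro t ⟨ht0, htl⟩ i
    rcases le_or_gt t (u l) with hle | hlt
    · exact ih t ⟨ht0, hle⟩ i
    have hul : 0 ≤ u l := hu0 ▸ hu l.zero_le
    have hfrozen : ∀ j ≠ i₀ l, f j t = g j t := fun j hj => by
      rw [eq_of_const_on_Ioc_of_tendsto_nhdsGT (hf j _ hul) (hfconst l j hj) ⟨hlt, htl⟩,
        eq_of_const_on_Ioc_of_tendsto_nhdsGT (hg j _ hul) (hgconst l j hj) ⟨hlt, htl⟩]
      exact ih _ ⟨hul, le_rfl⟩ j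
    by_cases hi : i = i₀ l
    · exact hi ▸ eq_of_sum_eq_of_forall_ne_eq (a := fun j => f j t) (b := fun j => g j t)
        (i₀ l) (hsum t ht0) hfrozen
    · exact hfrozen i hi

namespace IsGoodScheme

variable {Ω : Type*} [MeasurableSpace Ω] {μ : Measure Ω} {m : ℕ}
  {ρ : (Fin m → Ω → ℝ → ℝ) → Ω → ℝ} {𝒳 : Set (Fin m → Ω → ℝ → ℝ)}
  {δ δ' : (Fin m → Ω → ℝ → ℝ) → Fin m → ℝ → Ω → ℝ} {Y : Fin m → Ω → ℝ → ℝ}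

/-- Additivity holds only almost surely at each fixed time; countably many rational times and
right-continuity give it simultaneously for all times. -/
theorem ae_sum_eq (hδ : IsGoodScheme μ ρ 𝒳 δ) (hδ' : IsGoodScheme μ ρ 𝒳 δ') (hY : Y ∈ 𝒳) :
    ∀ᵐ ω ∂μ, ∀ t, 0 ≤ t → ∑ i, δ Y i t ω = ∑ i, δ' Y i t ω := by
  obtain ⟨-, hc, hadd, -⟩ := hδ Y hY
  obtain ⟨-, hc', hadd', -⟩ := hδ' Y hY
  have hrat : ∀ᵐ ω ∂μ, ∀ q : ℚ, 0 ≤ (q : ℝ) → ∑ i, δ Y i q ω = ∑ i, δ' Y i q ω :=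
    ae_all_iff.2 fun q => eventually_imp_distrib_left.2 fun hq => by
      filter_upwards [hadd q hq, hadd' q hq] with ω h h' using h.symm.trans h'
  filter_upwards [hrat] with ω hω t ht
  exact eq_of_tendsto_nhdsGT_of_eq_on_rat
    (tendsto_finsetSum _ fun i _ => (hc i ω).tendsto_nhdsGT ht)
    (tendsto_finsetSum _ fun i _ => (hc' i ω).tendsto_nhdsGT ht)
    fun q hq => hω q (ht.trans hq.le)

theorem ae_const_on_partition (hδ : IsGoodScheme μ ρ 𝒳 δ) (hY : Y ∈ 𝒳) {u : ℕ → ℝ}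
    {i₀ : ℕ → Fin m} (hu0 : 0 ≤ u 0) (hu : StrictMono u)
    (hYconst : ∀ l, ∀ j ≠ i₀ l, ∀ ω,
      ∀ x ∈ Ioc (u l) (u (l + 1)), ∀ y ∈ Ioc (u l) (u (l + 1)), Y j ω x = Y j ω y) :
    ∀ᵐ ω ∂μ, ∀ l, ∀ j ≠ i₀ l,
      ∀ x ∈ Ioc (u l) (u (l + 1)), ∀ y ∈ Ioc (u l) (u (l + 1)), δ Y j x ω = δ Y j y ω := by
  obtain ⟨-, -, -, hnorm⟩ := hδ Y hY
  refine ae_all_iff.2 fun l => ae_all_iff.2 fun j => eventually_imp_distrib_left.2 fun hj => ?_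
  exact hnorm j _ _ (hu0.trans (hu.monotone l.zero_le)) (hu l.lt_succ_self) (hYconst l j hj)

theorem ae_eq_delayed_of_isPhasedDelay (hδ : IsGoodScheme μ ρ 𝒳 δ)
    (hδ' : IsGoodScheme μ ρ 𝒳 δ') {X : Fin m → Ω → ℝ → ℝ} {τ : Fin m → ℝ → ℝ}
    (hX : delayed X τ ∈ 𝒳) (hτ : IsPhasedDelay τ) :
    ∀ᵐ ω ∂μ, ∀ i t, 0 ≤ t → δ (delayed X τ) i t ω = δ' (delayed X τ) i t ω := by
  obtain ⟨u, hu0, hu, hutop, hphased⟩ := hτ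
  choose i₀ hi₀ using hphased
  have hXconst : ∀ l, ∀ j ≠ i₀ l, ∀ ω, ∀ x ∈ Ioc (u l) (u (l + 1)),
      ∀ y ∈ Ioc (u l) (u (l + 1)), delayed X τ j ω x = delayed X τ j ω y :=
    fun l j hj ω x hx y hy => congrArg (X j ω) (hi₀ l j hj x hx y hy)
  obtain ⟨h0, hc, -, -⟩ := hδ _ hX
  obtain ⟨h0', hc', -, -⟩ := hδ' _ hX
  filter_upwards [hδ.ae_sum_eq hδ' hX, hδ.ae_const_on_partition hX hu0.ge hu hXconst,
    hδ'.ae_const_on_partition hX hu0.ge hu hXconst] with ω hsum hconst hconst' i t ht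
  exact eq_of_sum_eq_of_phased hu0 hu.monotone hutop (fun i => (h0 i ω).trans (h0' i ω).symm)
    (fun i _ hs => (hc i ω).tendsto_nhdsGT hs) (fun i _ hs => (hc' i ω).tendsto_nhdsGT hs)
    hsum hconst hconst' ht i

end IsGoodScheme

theorem uniqueness_of_additive_normalized_stable_schemes_general
    {Ω : Type*} [MeasurableSpace Ω] (μ : Measure Ω)
    {m : ℕ}
    (X : Fin m → Ω → ℝ → ℝ)
    (ρ : (Fin m → Ω → ℝ → ℝ) → Ω → ℝ)
    (𝒯 : Set (Fin m → ℝ → ℝ))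
    (τ : ℕ → Fin m → ℝ → ℝ) (hτmem : ∀ n, τ n ∈ 𝒯)
    (hτphased : ∀ n, IsPhasedDelay (τ n))
    (δ δ' : (Fin m → Ω → ℝ → ℝ) → Fin m → ℝ → Ω → ℝ)
    (hδ : IsGoodScheme μ ρ (insert X {Y | ∃ τ' ∈ 𝒯, Y = delayed X τ'}) δ)
    (hδ' : IsGoodScheme μ ρ (insert X {Y | ∃ τ' ∈ 𝒯, Y = delayed X τ'}) δ')
    (hδstab : StableAt μ X τ δ) (hδ'stab : StableAt μ X τ δ') :
    ∀ᵐ ω ∂μ, ∀ (i : Fin m) (t : ℝ), 0 ≤ t → δ X i t ω = δ' X i t ω := by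
  have hagree : ∀ n, ∀ᵐ ω ∂μ, ∀ i t, 0 ≤ t →
      δ (delayed X (τ n)) i t ω = δ' (delayed X (τ n)) i t ω := fun n =>
    hδ.ae_eq_delayed_of_isPhasedDelay hδ' (Or.inr ⟨τ n, hτmem n, rfl⟩) (hτphased n)
  have hleft : ∀ᵐ ω ∂μ, ∀ i (q : ℚ), 0 < (q : ℝ) →
      Function.leftLim (fun s => δ X i s ω) q = Function.leftLim (fun s => δ' X i s ω) q := by
    refine ae_all_iff.2 fun i => ae_all_iff.2 fun q => eventually_imp_distrib_left.2 fun hq => ?_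
    refine tendstoInMeasure_ae_unique (hδstab i q hq) ?_
    refine (hδ'stab i q hq).congr_left fun n => ?_
    filter_upwards [hagree n] with ω hω
    refine (leftLim_congr ?_ ?_).symm
    · filter_upwards [Ioo_mem_nhdsLT hq] with s hs using hω i s hs.1.le
    · exact hω i q hq.le
  obtain ⟨-, hc, -, -⟩ := hδ X (mem_insert _ _)
  obtain ⟨-, hc', -, -⟩ := hδ' X (mem_insert _ _)
  filter_upwards [hleft] with ω hω i t ht
  exact eq_of_tendsto_nhdsGT_of_eq_on_rat ((hc i ω).tendsto_leftLim_nhdsGT ht)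
    ((hc' i ω).tendsto_leftLim_nhdsGT ht) fun q hq => hω i q (ht.trans_lt hq)

/-- Theorem 5.1, Uniqueness. Two additive, normalized decomposition
schemes that are stable at `X` along a refining sequence of phased delays increasing to
identity coincide at `X` almost surely. -/
theorem uniqueness_of_additive_normalized_stable_schemes
    {Ω : Type*} [MeasurableSpace Ω] (μ : Measure Ω) [IsProbabilityMeasure μ]
    {m : ℕ} (hm : 1 ≤ m)
    (X : Fin m → Ω → ℝ → ℝ) (hX : ∀ i ω, CadlagOn (X i ω))
    (ρ : (Fin m → Ω → ℝ → ℝ) → Ω → ℝ)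
    (𝒯 : Set (Fin m → ℝ → ℝ)) (h𝒯 : ∀ τ' ∈ 𝒯, IsDelay τ')
    (τ : ℕ → Fin m → ℝ → ℝ) (hτmem : ∀ n, τ n ∈ 𝒯)
    (hτdelay : ∀ n, IsDelay (τ n))
    (hτphased : ∀ n, IsPhasedDelay (τ n))
    (hτref : IsRefiningToIdentity τ)
    (δ δ' : (Fin m → Ω → ℝ → ℝ) → Fin m → ℝ → Ω → ℝ)
    (hδ : IsGoodScheme μ ρ (insert X {Y | ∃ τ' ∈ 𝒯, Y = delayed X τ'}) δ)
    (hδ' : IsGoodScheme μ ρ (insert X {Y | ∃ τ' ∈ 𝒯, Y = delayed X τ'}) δ')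
    (hδstab : StableAt μ X τ δ) (hδ'stab : StableAt μ X τ δ') :
    ∀ᵐ ω ∂μ, ∀ (i : Fin m) (t : ℝ), 0 ≤ t → δ X i t ω = δ' X i t ω :=
  uniqueness_of_additive_normalized_stable_schemes_general μ X ρ 𝒯 τ hτmem hτphased δ δ' hδ hδ'
    hδstab hδ'stab
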